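/- arXiv:1606.05608 — 6 statements merged into one kernel-verified Lean document; each statement's English description precedes it below -/
import Mathlib

section
/- Let G be a Δ-regular graph on vertex set V of size D whose adjacency matrix has second-largest eigenvalue (in absolute value) at most λ. For x, y ∈ {-1,1}^V, define x^G ∈ {-1,1}^{E'} indexed by the ΔD directed edge-ends of G, where the coordinate for the edge-end at vertex u leading to vertex v has value x(u)x(v). Then |⟨x^G, y^G⟩ − (Δ/D)·⟨x,y⟩²| ≤ 2λD. -/
/-!
Put `z u = x u * y u ∈ {±1}`, so that `⟨x^G, y^G⟩` is the quadratic form `zᵀ A z` and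
`⟨x, y⟩ = ∑ z`. Split `z = w + c • 1` with `c` the mean of `z`, so `∑ w = 0`. Since `A` is
symmetric with constant row sums `Δ`, the cross terms vanish and the constant part contributes
exactly `Δ D c² = (Δ / D) ⟨x, y⟩²`. What remains is `wᵀ A w`, which the spectral bound controls
by `λ ‖w‖² ≤ λ ‖z‖² = λ D`.
-/

open Finset

section QuadraticForm

variable {ι : Type*} [Fintype ι]

theorem sum_sum_mul_add_const_mul_add_const {A : Matrix ι ι ℝ} {Δ : ℝ} (hsym : A.IsSymm)
    (hreg : ∀ u, ∑ v, A u v = Δ) {w : ι → ℝ} (hw : ∑ u, w u = 0) (c : ℝ) :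
    ∑ u, ∑ v, A u v * (w u + c) * (w v + c)
      = ∑ u, ∑ v, A u v * w u * w v + Δ * Fintype.card ι * c ^ 2 := by
  have hcol : ∀ v, ∑ u, A u v = Δ := fun v => by
    rw [← hreg v]
    exact sum_congr rfl fun u _ => hsym.apply v u
  have hrow_w : ∑ u, ∑ v, A u v * w u = 0 := by
    simp only [← sum_mul, hreg, ← mul_sum, hw, mul_zero]
  have hcol_w : ∑ u, ∑ v, A u v * w v = 0 := by
    rw [sum_comm]
    simp only [← sum_mul, hcol, ← mul_sum, hw, mul_zero]
  have hexpand : ∀ u v, A u v * (w u + c) * (w v + c)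
      = A u v * w u * w v + c * (A u v * w u) + c * (A u v * w v) + c ^ 2 * A u v :=
    fun u v => by ring
  simp only [hexpand, sum_add_distrib, ← mul_sum, hrow_w, hcol_w, hreg, sum_const, card_univ,
    nsmul_eq_mul]
  ring

theorem sum_sq_add_const {w : ι → ℝ} (hw : ∑ u, w u = 0) (c : ℝ) :
    ∑ u, (w u + c) ^ 2 = ∑ u, w u ^ 2 + Fintype.card ι * c ^ 2 := by
  have hexpand : ∀ u, (w u + c) ^ 2 = w u ^ 2 + 2 * c * w u + c ^ 2 := fun u => by ring
  simp only [hexpand, sum_add_distrib, ← mul_sum, hw, sum_const, card_univ, nsmul_eq_mul]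
  ring

theorem sum_sq_le_sum_sq_add_const {w : ι → ℝ} (hw : ∑ u, w u = 0) (c : ℝ) :
    ∑ u, w u ^ 2 ≤ ∑ u, (w u + c) ^ 2 := by
  rw [sum_sq_add_const hw]
  have : 0 ≤ (Fintype.card ι : ℝ) * c ^ 2 := by positivity
  linarith

end QuadraticForm

theorem sum_sub_div_card_eq_zero {n : ℕ} (hn : 0 < n) (z : Fin n → ℝ) :
    ∑ u, (z u - (∑ v, z v) / n) = 0 := by
  have : (n : ℝ) ≠ 0 := by positivity
  simp only [sum_sub_distrib, sum_const, card_univ, Fintype.card_fin, nsmul_eq_mul]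
  field_simp
  ring

theorem approximate_squaring_general (D : ℕ) (hD : 0 < D) (Δ lam : ℝ)
    (hlam : 0 ≤ lam)
    (A : Matrix (Fin D) (Fin D) ℝ) (hsym : A.IsSymm)
    (hreg : ∀ u, ∑ v, A u v = Δ)
    (hspec : ∀ z : Fin D → ℝ, (∑ u, z u) = 0 →
      |∑ u, ∑ v, A u v * z u * z v| ≤ lam * ∑ u, (z u) ^ 2)
    (x y : Fin D → ℤ)
    (hx : ∀ u, x u = 1 ∨ x u = -1) (hy : ∀ u, y u = 1 ∨ y u = -1) :
    |(∑ u, ∑ v, A u v * ((x u * x v * y u * y v : ℤ) : ℝ))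
        - (Δ / D) * ((∑ u, x u * y u : ℤ) : ℝ) ^ 2| ≤ 2 * lam * D := by
  set z : Fin D → ℝ := fun u => ((x u * y u : ℤ) : ℝ)
  set c := (∑ u, z u) / D
  set w : Fin D → ℝ := fun u => z u - c
  have hw : ∑ u, w u = 0 := sum_sub_div_card_eq_zero hD z
  have hz : ∀ u, z u = w u + c := fun u => by simp [w]
  have hz_sq : ∑ u, z u ^ 2 = D := by
    have : ∀ u, z u ^ 2 = 1 := fun u => by
      rcases hx u with h | h <;> rcases hy u with h' | h' <;> simp [z, h, h']
    simp [this]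
  have hquad : ∑ u, ∑ v, A u v * ((x u * x v * y u * y v : ℤ) : ℝ)
      = ∑ u, ∑ v, A u v * w u * w v + (Δ / D) * ((∑ u, x u * y u : ℤ) : ℝ) ^ 2 := by
    have hcast : ∀ u v, ((x u * x v * y u * y v : ℤ) : ℝ) = (w u + c) * (w v + c) :=
      fun u v => by rw [← hz, ← hz]; push_cast [z]; ring
    simp only [hcast, ← mul_assoc]
    rw [sum_sum_mul_add_const_mul_add_const hsym hreg hw, Fintype.card_fin]
    have : (D : ℝ) ≠ 0 := by positivity
    push_cast [c, z]
    field_simp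
  calc _ = |∑ u, ∑ v, A u v * w u * w v| := by rw [hquad, add_sub_cancel_right]
    _ ≤ lam * ∑ u, w u ^ 2 := hspec w hw
    _ ≤ lam * D := by
      gcongr
      simpa only [← hz, hz_sq] using sum_sq_le_sum_sq_add_const hw c
    _ ≤ 2 * lam * D := by nlinarith

/-- Approximate squaring via an expander.  `A` is the adjacency matrix of a
`(D, Δ, λ)`-graph: `Δ`-regular on `D` vertices with all eigenvalues other
than the largest bounded by `lam` in absolute value (expressed via the
quadratic form on zero-sum vectors).  Then the vector `x^G`, indexed by the
`ΔD` directed edge-ends and with value `x(u)x(v)` on the edge-end at `u`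
leading to `v`, satisfies `|⟨x^G, y^G⟩ − (Δ/D)·⟨x,y⟩²| ≤ 2λD`. -/
theorem approximate_squaring (D : ℕ) (hD : 0 < D) (Δ lam : ℝ)
    (hΔ : 0 < Δ) (hlam : 0 ≤ lam)
    (A : Matrix (Fin D) (Fin D) ℝ) (hsym : A.IsSymm)
    (hnn : ∀ u v, 0 ≤ A u v)
    (hreg : ∀ u, ∑ v, A u v = Δ)
    (hspec : ∀ z : Fin D → ℝ, (∑ u, z u) = 0 →
      |∑ u, ∑ v, A u v * z u * z v| ≤ lam * ∑ u, (z u) ^ 2)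
    (x y : Fin D → ℤ)
    (hx : ∀ u, x u = 1 ∨ x u = -1) (hy : ∀ u, y u = 1 ∨ y u = -1) :
    |(∑ u, ∑ v, A u v * ((x u * x v * y u * y v : ℤ) : ℝ))
        - (Δ / D) * ((∑ u, x u * y u : ℤ) : ℝ) ^ 2| ≤ 2 * lam * D :=
  approximate_squaring_general D hD Δ lam hlam A hsym hreg hspec x y hx hy
end

section
/- For every 0 < τ ≤ 1 and integer d ≥ 1 with exp(τ²d/4) ≥ 2, there exist N = ⌊exp(τ²d/4)⌋ vectors x₁, ..., x_N ∈ {-1,1}^d such that |⟨x_i, x_j⟩| < τd for all i ≠ j. -/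
open Finset

/-- Sign of a boolean, as a real number. -/
noncomputable def sg (b : Bool) : ℝ := if b then 1 else -1

lemma sg_true : sg true = 1 := rfl
lemma sg_false : sg false = -1 := rfl
lemma sg_not (b : Bool) : sg (!b) = -sg b := by cases b <;> simp [sg]
lemma sg_beq (a b : Bool) : sg a * sg b = sg (a == b) := by cases a <;> cases b <;> simp [sg]
lemma beq_beq (a b : Bool) : (a == (a == b)) = b := by revert a b; decide

/-- The (real) sum of signs of a boolean vector. -/
noncomputable def Ssum (d : ℕ) (ε : Fin d → Bool) : ℝ := ∑ u, sg (ε u)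

/-- Moment generating function identity. -/
lemma mgf (d : ℕ) (l : ℝ) :
    ∑ ε : Fin d → Bool, Real.exp (l * Ssum d ε) = (Real.exp l + Real.exp (-l)) ^ d := by
  have h : ∀ ε : Fin d → Bool, Real.exp (l * Ssum d ε) = ∏ u, Real.exp (l * sg (ε u)) := by
    intro ε
    rw [Ssum, Finset.mul_sum, Real.exp_sum]
  simp_rw [h]
  rw [← Fintype.piFinset_univ, ← Finset.prod_univ_sum (fun _ : Fin d => (univ : Finset Bool)) (fun _ b => Real.exp (l * sg b))]
  have : ∀ u : Fin d, ∑ b : Bool, Real.exp (l * sg b) = Real.exp l + Real.exp (-l) := by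
    intro u
    rw [Fintype.sum_bool]
    simp [sg, mul_comm]
  rw [Finset.prod_congr rfl (fun u _ => this u), Finset.prod_const, Finset.card_univ,
    Fintype.card_fin]

lemma upper_tail (d : ℕ) (τ t : ℝ) (hτ : 0 ≤ τ) (ht : 0 < t) :
    ((univ.filter fun ε : Fin d → Bool => t ≤ Ssum d ε).card : ℝ) * Real.exp (τ * t)
      + Real.exp (τ * (-(d : ℝ))) ≤ (Real.exp τ + Real.exp (-τ)) ^ d := by
  classical
  set A := univ.filter fun ε : Fin d → Bool => t ≤ Ssum d ε with hA
  have hε₀ : Ssum d (fun _ => false) = -(d : ℝ) := by simp [Ssum, sg]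
  have h0 : (fun _ => false : Fin d → Bool) ∉ A := by
    simp only [hA, mem_filter, mem_univ, true_and, hε₀]
    intro h; linarith
  have h1 : ∑ ε ∈ insert (fun _ => false : Fin d → Bool) A, Real.exp (τ * Ssum d ε)
      ≤ ∑ ε : Fin d → Bool, Real.exp (τ * Ssum d ε) :=
    Finset.sum_le_sum_of_subset_of_nonneg (subset_univ _) (fun _ _ _ => (Real.exp_pos _).le)
  rw [Finset.sum_insert h0, hε₀] at h1
  have h2 : (A.card : ℝ) * Real.exp (τ * t) ≤ ∑ ε ∈ A, Real.exp (τ * Ssum d ε) := by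
    have hs : ∑ _ε ∈ A, Real.exp (τ * t) ≤ ∑ ε ∈ A, Real.exp (τ * Ssum d ε) := by
      refine Finset.sum_le_sum ?_
      intro ε hε
      rw [hA, mem_filter] at hε
      exact Real.exp_le_exp.2 (mul_le_mul_of_nonneg_left hε.2 hτ)
    rwa [Finset.sum_const, nsmul_eq_mul] at hs
  rw [mgf d τ] at h1
  linarith

lemma flip_card (d : ℕ) (t : ℝ) :
    (univ.filter fun ε : Fin d → Bool => Ssum d ε ≤ -t).card
      = (univ.filter fun ε : Fin d → Bool => t ≤ Ssum d ε).card := by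
  classical
  have key : ∀ ε : Fin d → Bool, Ssum d (fun u => !(ε u)) = -Ssum d ε := by
    intro ε; simp [Ssum, sg_not]
  refine Finset.card_bij' (fun ε _ => fun u => !(ε u)) (fun ε _ => fun u => !(ε u)) ?_ ?_ ?_ ?_
  · intro ε hε
    rw [mem_filter] at hε ⊢
    refine ⟨mem_univ _, ?_⟩
    rw [key]; linarith [hε.2]
  · intro ε hε
    rw [mem_filter] at hε ⊢
    refine ⟨mem_univ _, ?_⟩
    rw [key]; linarith [hε.2]
  · intro ε _; funext u; simp
  · intro ε _; funext u; simp

lemma tail_bound (d : ℕ) (τ t : ℝ) (hτ : 0 ≤ τ) (ht : 0 < t) :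
    ((univ.filter fun ε : Fin d → Bool => t ≤ |Ssum d ε|).card : ℝ)
      < 2 * ((Real.exp τ + Real.exp (-τ)) ^ d * Real.exp (-(τ * t))) := by
  classical
  have hsub : (univ.filter fun ε : Fin d → Bool => t ≤ |Ssum d ε|)
      ⊆ (univ.filter fun ε : Fin d → Bool => t ≤ Ssum d ε)
        ∪ (univ.filter fun ε : Fin d → Bool => Ssum d ε ≤ -t) := by
    intro ε hε
    rw [mem_filter] at hε
    rcases abs_cases (Ssum d ε) with ⟨h, _⟩ | ⟨h, _⟩
    · exact mem_union_left _ (mem_filter.2 ⟨mem_univ _, by linarith [hε.2]⟩)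
    · exact mem_union_right _ (mem_filter.2 ⟨mem_univ _, by linarith [hε.2]⟩)
  have hcard : ((univ.filter fun ε : Fin d → Bool => t ≤ |Ssum d ε|).card : ℝ)
      ≤ 2 * ((univ.filter fun ε : Fin d → Bool => t ≤ Ssum d ε).card : ℝ) := by
    have := Finset.card_le_card hsub
    have h2 := Finset.card_union_le (univ.filter fun ε : Fin d → Bool => t ≤ Ssum d ε)
      (univ.filter fun ε : Fin d → Bool => Ssum d ε ≤ -t)
    rw [flip_card] at h2
    have : (univ.filter fun ε : Fin d → Bool => t ≤ |Ssum d ε|).card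
        ≤ 2 * (univ.filter fun ε : Fin d → Bool => t ≤ Ssum d ε).card := by omega
    exact_mod_cast this
  have hup := upper_tail d τ t hτ ht
  have hE : (0:ℝ) < Real.exp (τ * t) := Real.exp_pos _
  have hup' : ((univ.filter fun ε : Fin d → Bool => t ≤ Ssum d ε).card : ℝ)
      < (Real.exp τ + Real.exp (-τ)) ^ d * Real.exp (-(τ * t)) := by
    have hrw : Real.exp (-(τ * t)) = (Real.exp (τ * t))⁻¹ := Real.exp_neg _
    rw [hrw, ← div_eq_mul_inv, lt_div_iff₀ hE]
    have := Real.exp_pos (τ * (-(d : ℝ)))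
    linarith
  linarith

lemma inner_as_S {N d : ℕ} (ω : Fin N → Fin d → Bool) (i j : Fin N) :
    ∑ u, sg (ω i u) * sg (ω j u) = Ssum d (fun u => ω i u == ω j u) := by
  simp_rw [Ssum, sg_beq]

/-- Counting tuples where a fixed pair is bad: step (a), reduce to a single coordinate. -/
lemma pair_count_a (N d : ℕ) (t : ℝ) (i j : Fin N) (hij : i ≠ j) :
    (univ.filter fun ω : Fin N → Fin d → Bool =>
        t ≤ |∑ u, sg (ω i u) * sg (ω j u)|).card
      = (univ.filter fun ω : Fin N → Fin d → Bool => t ≤ |Ssum d (ω j)|).card := by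
  classical
  set ψ : (Fin N → Fin d → Bool) → (Fin N → Fin d → Bool) :=
    fun ω k => if k = j then (fun u => ω i u == ω j u) else ω k with hψ
  have hψi : ∀ ω, ψ ω i = ω i := fun ω => by simp [hψ, hij]
  have hψj : ∀ ω, ψ ω j = fun u => ω i u == ω j u := fun ω => by simp [hψ]
  have hinv : ∀ ω, ψ (ψ ω) = ω := by
    intro ω
    funext k u
    by_cases hk : k = j
    · subst hk
      simp only [hψj, hψi, beq_beq]
    · simp [hψ, hk]
  refine Finset.card_bij' (fun ω _ => ψ ω) (fun ω _ => ψ ω) ?_ ?_ ?_ ?_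
  · intro ω hω
    rw [mem_filter] at hω ⊢
    refine ⟨mem_univ _, ?_⟩
    show t ≤ |Ssum d (ψ ω j)|
    rw [hψj]
    rw [inner_as_S] at hω
    exact hω.2
  · intro ω hω
    rw [mem_filter] at hω ⊢
    refine ⟨mem_univ _, ?_⟩
    show t ≤ |∑ u, sg (ψ ω i u) * sg (ψ ω j u)|
    rw [inner_as_S, hψi, hψj]
    have : (fun u => ω i u == (ω i u == ω j u)) = ω j := by
      funext u; rw [beq_beq]
    rw [this]
    exact hω.2
  · intro ω _; exact hinv ω
  · intro ω _; exact hinv ω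

/-- Step (b): counting tuples constrained at a single coordinate. -/
lemma pair_count_b (N d : ℕ) (t : ℝ) (j : Fin N) :
    (univ.filter fun ω : Fin N → Fin d → Bool => t ≤ |Ssum d (ω j)|).card
      = (univ.filter fun ε : Fin d → Bool => t ≤ |Ssum d ε|).card * (2 ^ d) ^ (N - 1) := by
  classical
  have e : {ω : Fin N → Fin d → Bool // t ≤ |Ssum d (ω j)|}
      ≃ {ε : Fin d → Bool // t ≤ |Ssum d ε|} × ({k : Fin N // k ≠ j} → (Fin d → Bool)) :=
    { toFun := fun ω => (⟨ω.1 j, ω.2⟩, fun k => ω.1 k.1),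
      invFun := fun p => ⟨fun k => if h : k = j then p.1.1 else p.2 ⟨k, h⟩, by simp [p.1.2]⟩,
      left_inv := fun ω => by
        ext k u
        by_cases h : k = j
        · subst h; simp
        · simp [h],
      right_inv := fun p => by
        refine Prod.ext ?_ ?_
        · simp
        · funext k
          simp [k.2] }
  have h1 := Fintype.card_congr e
  rw [Fintype.card_subtype, Fintype.card_prod, Fintype.card_subtype] at h1
  rw [h1, Fintype.card_fun, Fintype.card_fun, Fintype.card_bool, Fintype.card_fin]
  congr 2
  have : (univ.filter fun k : Fin N => k ≠ j) = univ.erase j := Finset.filter_ne' _ _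
  rw [Fintype.card_subtype, this, Finset.card_erase_of_mem (mem_univ _), Finset.card_univ,
    Fintype.card_fin]

lemma two_mul_pairs_le (N : ℕ) :
    2 * (univ.filter fun p : Fin N × Fin N => p.1 < p.2).card ≤ N * N := by
  classical
  have hswap : (univ.filter fun p : Fin N × Fin N => p.1 < p.2).card
      = (univ.filter fun p : Fin N × Fin N => p.2 < p.1).card := by
    refine Finset.card_bij' (fun p _ => p.swap) (fun p _ => p.swap) ?_ ?_ ?_ ?_
    · intro p hp; rw [mem_filter] at hp ⊢; exact ⟨mem_univ _, hp.2⟩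
    · intro p hp; rw [mem_filter] at hp ⊢; exact ⟨mem_univ _, hp.2⟩
    · intro p _; exact Prod.swap_swap p
    · intro p _; exact Prod.swap_swap p
  have hdisj : Disjoint (univ.filter fun p : Fin N × Fin N => p.1 < p.2)
      (univ.filter fun p : Fin N × Fin N => p.2 < p.1) := by
    rw [Finset.disjoint_left]
    intro p hp hp'
    rw [mem_filter] at hp hp'
    exact absurd hp'.2 (lt_asymm hp.2)
  have hle := Finset.card_le_card (Finset.subset_univ
    ((univ.filter fun p : Fin N × Fin N => p.1 < p.2)
      ∪ (univ.filter fun p : Fin N × Fin N => p.2 < p.1)))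
  rw [Finset.card_union_of_disjoint hdisj, ← hswap, Finset.card_univ, Fintype.card_prod,
    Fintype.card_fin] at hle
  omega

/-- There are `N = ⌊exp(τ²d/4)⌋` vectors in `{-1,1}^d` whose pairwise inner
products are all below `τd` in absolute value. -/
theorem exists_low_correlation_family (d : ℕ) (hd : 1 ≤ d) (τ : ℝ)
    (hτ0 : 0 < τ) (hτ1 : τ ≤ 1)
    (hN : 2 ≤ Real.exp (τ ^ 2 * d / 4)) :
    ∃ x : Fin ⌊Real.exp (τ ^ 2 * d / 4)⌋₊ → Fin d → ℤ,
      (∀ i u, x i u = 1 ∨ x i u = -1) ∧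
      ∀ i j, i ≠ j → |((∑ u, x i u * x j u : ℤ) : ℝ)| < τ * d := by
  classical
  set E : ℝ := Real.exp (τ ^ 2 * d / 4) with hE
  set N : ℕ := ⌊E⌋₊ with hNdef
  set t : ℝ := τ * d with htdef
  have hdpos : (0:ℝ) < d := by exact_mod_cast hd
  have ht : 0 < t := mul_pos hτ0 hdpos
  have hN1 : 1 ≤ N := by
    have : (2:ℕ) ≤ N := Nat.le_floor (by exact_mod_cast hN)
    omega
  have hNE : (N : ℝ) ≤ E := Nat.floor_le (Real.exp_nonneg _)
  -- the tail count
  set T : ℕ := (univ.filter fun ε : Fin d → Bool => t ≤ |Ssum d ε|).card with hTdef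
  set R : ℕ := (2 ^ d) ^ (N - 1) with hRdef
  -- Chernoff bound for T
  have hT : (T : ℝ) < 2 * (2:ℝ) ^ d * Real.exp (-(τ ^ 2 * d / 2)) := by
    have h1 := tail_bound d τ t hτ0.le ht
    have hcosh : Real.exp τ + Real.exp (-τ) ≤ 2 * Real.exp (τ ^ 2 / 2) := by
      have := Real.cosh_le_exp_half_sq τ
      rw [Real.cosh_eq] at this
      linarith
    have hpow : (Real.exp τ + Real.exp (-τ)) ^ d ≤ (2:ℝ) ^ d * Real.exp (τ ^ 2 * d / 2) := by
      calc (Real.exp τ + Real.exp (-τ)) ^ d ≤ (2 * Real.exp (τ ^ 2 / 2)) ^ d := by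
            refine pow_le_pow_left₀ ?_ hcosh d
            positivity
        _ = (2:ℝ) ^ d * Real.exp (τ ^ 2 / 2) ^ d := mul_pow _ _ _
        _ = (2:ℝ) ^ d * Real.exp (τ ^ 2 * d / 2) := by
            rw [← Real.exp_nat_mul]
            congr 1
            ring
    have hexp : Real.exp (τ ^ 2 * d / 2) * Real.exp (-(τ * t)) = Real.exp (-(τ ^ 2 * d / 2)) := by
      rw [← Real.exp_add]
      congr 1
      rw [htdef]
      ring
    calc (T : ℝ) < 2 * ((Real.exp τ + Real.exp (-τ)) ^ d * Real.exp (-(τ * t))) := h1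
      _ ≤ 2 * ((2:ℝ) ^ d * Real.exp (τ ^ 2 * d / 2) * Real.exp (-(τ * t))) := by
          have hpos : (0:ℝ) < Real.exp (-(τ * t)) := Real.exp_pos _
          nlinarith [Real.exp_pos (-(τ * t))]
      _ = 2 * (2:ℝ) ^ d * Real.exp (-(τ ^ 2 * d / 2)) := by
          rw [mul_assoc ((2:ℝ) ^ d), hexp]
          ring
  -- the good set is nonempty
  set G : Finset (Fin N → Fin d → Bool) := univ.filter
    (fun ω => ∀ i j : Fin N, i ≠ j → |∑ u, sg (ω i u) * sg (ω j u)| < t) with hGdef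
  set Gc : Finset (Fin N → Fin d → Bool) := univ.filter
    (fun ω => ¬ ∀ i j : Fin N, i ≠ j → |∑ u, sg (ω i u) * sg (ω j u)| < t) with hGcdef
  set L : Finset (Fin N × Fin N) := univ.filter (fun p => p.1 < p.2) with hLdef
  have hGcsub : Gc ⊆ L.biUnion (fun p => univ.filter
      (fun ω : Fin N → Fin d → Bool => t ≤ |∑ u, sg (ω p.1 u) * sg (ω p.2 u)|)) := by
    intro ω hω
    rw [hGcdef, mem_filter] at hω
    push_neg at hω
    obtain ⟨_, i, j, hij, hbad⟩ := hω
    rcases lt_or_gt_of_ne hij with hlt | hlt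
    · exact Finset.mem_biUnion.2 ⟨(i, j), mem_filter.2 ⟨mem_univ _, hlt⟩,
        mem_filter.2 ⟨mem_univ _, hbad⟩⟩
    · refine Finset.mem_biUnion.2 ⟨(j, i), mem_filter.2 ⟨mem_univ _, hlt⟩,
        mem_filter.2 ⟨mem_univ _, ?_⟩⟩
      simpa [mul_comm] using hbad
  have hGc : Gc.card ≤ L.card * (T * R) := by
    calc Gc.card ≤ ∑ p ∈ L, (univ.filter
        (fun ω : Fin N → Fin d → Bool => t ≤ |∑ u, sg (ω p.1 u) * sg (ω p.2 u)|)).card :=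
          le_trans (Finset.card_le_card hGcsub) (Finset.card_biUnion_le)
      _ = ∑ _p ∈ L, T * R := by
          refine Finset.sum_congr rfl ?_
          intro p hp
          rw [hLdef, mem_filter] at hp
          rw [pair_count_a N d t p.1 p.2 (ne_of_lt hp.2), pair_count_b N d t p.2]
      _ = L.card * (T * R) := by rw [Finset.sum_const, smul_eq_mul]
  -- numeric comparison
  have hLN := two_mul_pairs_le N
  have hTnn : (0:ℝ) ≤ (T:ℝ) := Nat.cast_nonneg _
  have hNsq : (N:ℝ) ^ 2 ≤ Real.exp (τ ^ 2 * d / 2) := by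
    have h2 : (N:ℝ) ^ 2 ≤ E ^ 2 := by
      refine pow_le_pow_left₀ (Nat.cast_nonneg _) hNE 2
    calc (N:ℝ) ^ 2 ≤ E ^ 2 := h2
      _ = Real.exp (τ ^ 2 * d / 2) := by
          rw [hE, ← Real.exp_nat_mul]
          congr 1
          push_cast
          ring
  have hNpos : (0:ℝ) < (N:ℝ) ^ 2 := by positivity
  have hkey : (L.card : ℝ) * T < (2:ℝ) ^ d := by
    have h1 : 2 * ((L.card : ℝ) * T) ≤ (N:ℝ) ^ 2 * T := by
      have : (2 * L.card : ℝ) ≤ (N:ℝ) ^ 2 := by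
        have := hLN
        have h := (Nat.cast_le (α := ℝ)).2 this
        push_cast at h ⊢
        nlinarith
      nlinarith
    have h2 : (N:ℝ) ^ 2 * T < (N:ℝ) ^ 2 * (2 * (2:ℝ) ^ d * Real.exp (-(τ ^ 2 * d / 2))) :=
      mul_lt_mul_of_pos_left hT hNpos
    have h3 : (N:ℝ) ^ 2 * (2 * (2:ℝ) ^ d * Real.exp (-(τ ^ 2 * d / 2))) ≤ 2 * (2:ℝ) ^ d := by
      have hprod : Real.exp (τ ^ 2 * d / 2) * Real.exp (-(τ ^ 2 * d / 2)) = 1 := by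
        rw [← Real.exp_add]; simp
      have hexppos : (0:ℝ) < Real.exp (-(τ ^ 2 * d / 2)) := Real.exp_pos _
      have h2d : (0:ℝ) < (2:ℝ) ^ d := by positivity
      nlinarith
    linarith
  have hRpos : (0:ℝ) < (R:ℝ) := by
    rw [hRdef]; push_cast; positivity
  have hcard : (Gc.card : ℝ) < (((2:ℕ) ^ d) ^ N : ℕ) := by
    calc (Gc.card : ℝ) ≤ (L.card : ℝ) * ((T:ℝ) * (R:ℝ)) := by exact_mod_cast hGc
      _ = ((L.card : ℝ) * T) * R := by ring
      _ < (2:ℝ) ^ d * R := mul_lt_mul_of_pos_right hkey hRpos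
      _ = (((2:ℕ) ^ d) ^ N : ℕ) := by
          rw [hRdef]
          push_cast
          rw [← pow_succ']
          congr 1
          omega
  have hcardΩ : Fintype.card (Fin N → Fin d → Bool) = ((2:ℕ) ^ d) ^ N := by
    rw [Fintype.card_fun, Fintype.card_fun, Fintype.card_bool, Fintype.card_fin,
      Fintype.card_fin]
  have hGne : G.Nonempty := by
    rw [← Finset.card_pos]
    have hsplit := Finset.card_filter_add_card_filter_not
      (s := (univ : Finset (Fin N → Fin d → Bool)))
      (p := fun ω => ∀ i j : Fin N, i ≠ j → |∑ u, sg (ω i u) * sg (ω j u)| < t)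
    rw [Finset.card_univ, hcardΩ] at hsplit
    rw [← hGdef, ← hGcdef] at hsplit
    have h2 : Gc.card < ((2:ℕ) ^ d) ^ N := by exact_mod_cast hcard
    omega
  obtain ⟨ω, hω⟩ := hGne
  rw [hGdef, mem_filter] at hω
  refine ⟨fun i u => if ω i u then 1 else -1, fun i u => by by_cases h : ω i u <;> simp [h], ?_⟩
  intro i j hij
  have hc : ((∑ u, (if ω i u then (1:ℤ) else -1) * (if ω j u then (1:ℤ) else -1) : ℤ) : ℝ)
      = ∑ u, sg (ω i u) * sg (ω j u) := by
    push_cast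
    refine Finset.sum_congr rfl ?_
    intro u _
    by_cases h1 : ω i u <;> by_cases h2 : ω j u <;> simp [h1, h2, sg]
  rw [hc]
  exact hω.2 i j hij
end

section
/- Let A be an N × N real symmetric matrix with all diagonal entries equal to 1 and all off-diagonal entries of absolute value at most 1/√N. Then rank(A) ≥ N/2. -/
/-!
Since `A` is symmetric, `tr A = ∑ λᵢ` and `tr (A²) = ∑ λᵢ²`, where only the `rank A` nonzero
eigenvalues contribute; Cauchy–Schwarz gives `(tr A)² ≤ rank A · tr (A²)`. With unit diagonal,
`tr A = N`, while `tr (A²) = ∑ᵢⱼ Aᵢⱼ² ≤ N (1 + (N - 1)/N) ≤ 2N`. Hence `N² ≤ 2N · rank A`.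
-/

open Finset

namespace Matrix

variable {n : Type*} [Fintype n]

lemma IsSymm.trace_mul_self_eq_sum_sq {R : Type*} [CommSemiring R] {A : Matrix n n R}
    (hA : A.IsSymm) : (A * A).trace = ∑ i, ∑ j, A i j ^ 2 := by
  simp only [trace, diag, mul_apply, sq]
  refine sum_congr rfl fun i _ ↦ sum_congr rfl fun j _ ↦ ?_
  rw [hA.apply i j]

variable [DecidableEq n] {𝕜 : Type*} [RCLike 𝕜] {A : Matrix n n 𝕜}

lemma IsHermitian.trace_mul_self_eq_sum_sq_eigenvalues (hA : A.IsHermitian) :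
    (A * A).trace = ∑ i, (hA.eigenvalues i : 𝕜) ^ 2 := by
  conv_lhs => rw [hA.spectral_theorem, ← map_mul, Unitary.conjStarAlgAut_apply]
  rw [trace_mul_cycle, Unitary.coe_star_mul_self, one_mul, diagonal_mul_diagonal, trace_diagonal]
  simp [sq]

lemma IsHermitian.sq_re_trace_le_rank_mul_re_trace_mul_self (hA : A.IsHermitian) :
    RCLike.re A.trace ^ 2 ≤ A.rank * RCLike.re (A * A).trace := by
  set s := univ.filter fun i ↦ hA.eigenvalues i ≠ 0
  have hrank : A.rank = #s := by
    rw [hA.rank_eq_card_non_zero_eigs, Fintype.card_subtype]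
  have htrace : RCLike.re A.trace = ∑ i ∈ s, hA.eigenvalues i := by
    simp only [hA.trace_eq_sum_eigenvalues, map_sum, RCLike.ofReal_re, s, sum_filter_ne_zero]
  have htrace_mul_self : ∑ i ∈ s, hA.eigenvalues i ^ 2 ≤ RCLike.re (A * A).trace := by
    simp only [hA.trace_mul_self_eq_sum_sq_eigenvalues, map_sum, ← RCLike.ofReal_pow,
      RCLike.ofReal_re]
    exact sum_le_sum_of_subset_of_nonneg (filter_subset _ _) fun i _ _ ↦ sq_nonneg _
  calc RCLike.re A.trace ^ 2 = (∑ i ∈ s, hA.eigenvalues i) ^ 2 := by rw [htrace]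
    _ ≤ #s * ∑ i ∈ s, hA.eigenvalues i ^ 2 := sq_sum_le_card_mul_sum_sq
    _ ≤ A.rank * RCLike.re (A * A).trace := by rw [hrank]; gcongr

end Matrix

lemma sum_sq_le_two_of_abs_le_inv_sqrt_card {n : Type*} [Fintype n] (x : n → ℝ) (i : n)
    (hi : |x i| ≤ 1) (hx : ∀ j, i ≠ j → |x j| ≤ 1 / √(Fintype.card n)) :
    ∑ j, x j ^ 2 ≤ 2 := by
  classical
  set c : ℝ := (Fintype.card n : ℝ)
  have hc : 0 < c := Nat.cast_pos.mpr (Fintype.card_pos_iff.mpr ⟨i⟩)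
  have hoff : ∀ j ∈ univ.erase i, x j ^ 2 ≤ 1 / c := fun j hj ↦
    calc x j ^ 2 = |x j| ^ 2 := (sq_abs _).symm
      _ ≤ (1 / √c) ^ 2 := by gcongr; exact hx j (ne_of_mem_erase hj).symm
      _ = 1 / c := by rw [div_pow, one_pow, Real.sq_sqrt hc.le]
  calc ∑ j, x j ^ 2 = x i ^ 2 + ∑ j ∈ univ.erase i, x j ^ 2 :=
        (add_sum_erase _ _ (mem_univ i)).symm
    _ ≤ 1 + ∑ _j : n, 1 / c := by
      gcongr
      · exact (sq_le_one_iff_abs_le_one _).mpr hi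
      · exact (sum_le_sum hoff).trans <|
          sum_le_sum_of_subset_of_nonneg (erase_subset _ _) fun _ _ _ ↦ by positivity
    _ = 2 := by rw [sum_const, card_univ, nsmul_eq_mul, mul_one_div_cancel hc.ne']; norm_num

/-- Alon's rank lemma: an `N × N` real symmetric matrix with unit diagonal and
off-diagonal entries at most `1/√N` in absolute value has rank at least `N/2`. -/
theorem alon_rank_lemma (N : ℕ) (A : Matrix (Fin N) (Fin N) ℝ)
    (hsym : A.IsSymm) (hdiag : ∀ i, A i i = 1)
    (hoff : ∀ i j, i ≠ j → |A i j| ≤ 1 / Real.sqrt N) :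
    (N : ℝ) / 2 ≤ (A.rank : ℝ) := by
  rcases N.eq_zero_or_pos with rfl | hN
  · simp
  have htrace : A.trace = N := by simp [Matrix.trace, hdiag]
  have htrace_mul_self : (A * A).trace ≤ 2 * N := by
    rw [hsym.trace_mul_self_eq_sum_sq]
    calc ∑ i, ∑ j, A i j ^ 2 ≤ ∑ _i : Fin N, (2 : ℝ) := sum_le_sum fun i _ ↦
          sum_sq_le_two_of_abs_le_inv_sqrt_card (A i) i (by simp [hdiag]) (by simpa using hoff i)
      _ = 2 * N := by simp [mul_comm]
  have key : (N : ℝ) ^ 2 ≤ A.rank * (2 * N) := by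
    have h := (Matrix.isHermitian_iff_isSymm.mpr hsym).sq_re_trace_le_rank_mul_re_trace_mul_self
    rw [RCLike.re_to_real, RCLike.re_to_real, htrace] at h
    exact h.trans (by gcongr)
  have hN' : (0 : ℝ) < N := Nat.cast_pos.mpr hN
  nlinarith
end

section
/- Let B = (b_{ij}) be an N × N matrix over a field with rank(B) = D', and let k be a positive integer. Define A = (a_{ij}) by a_{ij} = b_{ij}^k. Then rank(A) ≤ C(D'+k−1, k), the binomial coefficient. -/
/-!
Factor `B = C * D` through `Fin B.rank`. Expanding `(∑ d, C i d * D d j) ^ k` multinomially and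
grouping the terms by the multiset of indices `d` that occur, the entrywise `k`-th power factors
through `Sym (Fin B.rank) k`, a type with `(B.rank + k - 1).choose k` elements.
-/

namespace Matrix

variable {m n ι R : Type*}

theorem exists_eq_mul_of_rank {K : Type*} [Field K] [Fintype n] (A : Matrix m n K) :
    ∃ (C : Matrix m (Fin A.rank) K) (D : Matrix (Fin A.rank) n K), A = C * D := by
  classical
  let b : Module.Basis (Fin A.rank) K (LinearMap.range A.mulVecLin) := Module.finBasis K _
  have hcol_mem : ∀ j, A.col j ∈ LinearMap.range A.mulVecLin :=
    fun j => ⟨Pi.single j 1, by simp⟩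
  refine ⟨of fun i d => (b d : m → K) i, of fun d j => b.repr ⟨A.col j, hcol_mem j⟩ d, ?_⟩
  ext i j
  have hcol := congrFun (congrArg Subtype.val (b.sum_repr ⟨A.col j, hcol_mem j⟩)) i
  simp only [Submodule.coe_sum, Submodule.coe_smul, Finset.sum_apply, Pi.smul_apply,
    smul_eq_mul, col_apply] at hcol
  simp only [mul_apply, of_apply, ← hcol, mul_comm]

section SymPow

variable [Fintype ι] [DecidableEq ι]

theorem map_pow_mul_eq [CommSemiring R] (C : Matrix m ι R) (D : Matrix ι n R) (k : ℕ) :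
    (C * D).map (· ^ k) =
      (of fun i (s : Sym ι k) => (s.val.countPerms : R) * (s.val.map (C i)).prod :
          Matrix m (Sym ι k) R) *
        (of fun s j => (s.val.map (D · j)).prod : Matrix (Sym ι k) n R) := by
  ext i j
  simp only [map_apply, mul_apply, of_apply, Finset.sum_pow, Finset.sym_univ,
    Multiset.prod_map_mul, mul_assoc]

theorem rank_map_pow_mul_le [CommRing R] [StrongRankCondition R] [Fintype n]
    (C : Matrix m ι R) (D : Matrix ι n R) (k : ℕ) :
    ((C * D).map (· ^ k)).rank ≤ (Fintype.card ι + k - 1).choose k := by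
  rw [map_pow_mul_eq, ← Sym.card_sym_eq_choose]
  exact (rank_mul_le_left _ _).trans (rank_le_card_width _)

end SymPow

end Matrix

theorem rank_entrywise_pow_le_general {F : Type*} [Field F] (N k : ℕ)
    (B : Matrix (Fin N) (Fin N) F) :
    (Matrix.of fun i j => (B i j) ^ k).rank ≤ (B.rank + k - 1).choose k := by
  obtain ⟨C, D, hB⟩ := B.exists_eq_mul_of_rank
  have h := Matrix.rank_map_pow_mul_le C D k
  rwa [← hB, Fintype.card_fin] at h

/-- Entrywise `k`-th power increases rank at most to `C(D'+k−1, k)` where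
`D'` is the rank of the original matrix. -/
theorem rank_entrywise_pow_le {F : Type*} [Field F] (N k : ℕ) (hk : 0 < k)
    (B : Matrix (Fin N) (Fin N) F) :
    (Matrix.of fun i j => (B i j) ^ k).rank ≤ (B.rank + k - 1).choose k :=
  rank_entrywise_pow_le_general N k B
end

section
/- Let B be an N × N real symmetric matrix with diagonal entries 1 and off-diagonal entries of absolute value at most ε, where 1/√N ≤ ε ≤ 1/100, and let D' = rank(B). Then D' ≥ (r/5)·(1/ε)^{2r/(r+1)}, where r = (log₂ N)/(2 log₂(1/ε)). -/
/-!
Put `x = 1/ε`, so that `N = x ^ (2r)`, and `k = ⌈r⌉`. The entrywise power `A = B^{∘k}` is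
symmetric with unit diagonal and off-diagonal entries of square at most `ε ^ (2k) ≤ 1/N`, so
`tr(A)² ≤ rank(A) · tr(A²)` (Cauchy–Schwarz on the nonzero eigenvalues) gives
`rank(A) ≥ N/2`. On the other hand the columns of `A` are `k`-th powers of vectors in the column
space of `B`, hence lie in the span of the products of `k` basis vectors of that space, so
`rank(A) ≤ C(D' + k - 1, k) ≤ (e(D' + k - 1)/k)^k`. Taking `k`-th roots of
`x ^ (2r) ≤ 2 (e(D' + k - 1)/k)^k` and using `r ≤ k < r + 1` yields the bound.
-/

open Matrix Finset Module

theorem Submodule.pow_mem_span_range_sym_prod {K R ι : Type*} [CommSemiring K] [CommSemiring R]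
    [Algebra K R] [Fintype ι] {c : ι → R} {w : R} (hw : w ∈ span K (Set.range c)) (k : ℕ) :
    w ^ k ∈ span K (Set.range fun s : Sym ι k => (s.1.map c).prod) := by
  obtain ⟨a, rfl⟩ := (mem_span_range_iff_exists_fun K).mp hw
  rw [Finset.sum_pow']
  refine sum_mem fun g _ => ?_
  rw [Finset.prod_smul]
  refine smul_mem _ _ (subset_span ⟨⟨List.ofFn g, by simp⟩, ?_⟩)
  simp [List.map_ofFn, List.prod_ofFn]

theorem Matrix.rank_map_pow_le {m n K : Type*} [Fintype m] [Fintype n] [Field K]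
    (B : Matrix m n K) (k : ℕ) : (B.map (· ^ k)).rank ≤ (B.rank + k - 1).choose k := by
  set W := Submodule.span K (Set.range B.col)
  let b := Module.finBasis K W
  set c : Fin (finrank K W) → m → K := fun t => b t
  have hcol : ∀ j, B.col j ∈ Submodule.span K (Set.range c) := by
    intro j
    rw [Set.range_comp', ← W.coe_subtype, Submodule.span_image, b.span_eq,
      Submodule.map_subtype_top]
    exact Submodule.subset_span ⟨j, rfl⟩
  calc (B.map (· ^ k)).rank
      ≤ finrank K (Submodule.span K (Set.range fun s : Sym _ k => (s.1.map c).prod)) := by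
        rw [rank_eq_finrank_span_cols]
        refine Submodule.finrank_mono (Submodule.span_le.mpr ?_)
        rintro _ ⟨j, rfl⟩
        exact Submodule.pow_mem_span_range_sym_prod (hcol j) k
    _ ≤ Fintype.card (Sym (Fin (finrank K W)) k) := finrank_range_le_card _
    _ = (B.rank + k - 1).choose k := by
        rw [Sym.card_sym_eq_choose, Fintype.card_fin, rank_eq_finrank_span_cols]

theorem Matrix.IsHermitian.trace_mul_self_eq_sum_sq_eigenvalues_s15 {n : Type*} [Fintype n]
    [DecidableEq n] {A : Matrix n n ℝ} (hA : A.IsHermitian) :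
    (A * A).trace = ∑ i, hA.eigenvalues i ^ 2 := by
  conv_lhs => rw [hA.spectral_theorem, ← map_mul, Unitary.conjStarAlgAut_apply, trace_mul_cycle,
    Unitary.coe_star_mul_self, one_mul, diagonal_mul_diagonal, trace_diagonal]
  simp [sq]

theorem Matrix.IsHermitian.sq_trace_le_rank_mul_trace_mul_self {n : Type*} [Fintype n]
    [DecidableEq n] {A : Matrix n n ℝ} (hA : A.IsHermitian) :
    A.trace ^ 2 ≤ A.rank * (A * A).trace := by
  set μ := hA.eigenvalues
  have hsupp : ∑ i, μ i = ∑ i with μ i ≠ 0, μ i := (sum_filter_ne_zero _).symm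
  have hrank : A.rank = #{i | μ i ≠ 0} := by
    rw [hA.rank_eq_card_non_zero_eigs, Fintype.card_subtype]
  calc A.trace ^ 2 = (∑ i with μ i ≠ 0, μ i) ^ 2 := by
        simp [hA.trace_eq_sum_eigenvalues, hsupp, μ]
    _ ≤ #{i | μ i ≠ 0} * ∑ i with μ i ≠ 0, μ i ^ 2 := sq_sum_le_card_mul_sum_sq
    _ ≤ #{i | μ i ≠ 0} * ∑ i, μ i ^ 2 := by
        gcongr
        exact subset_univ _
    _ = A.rank * (A * A).trace := by
        rw [hA.trace_mul_self_eq_sum_sq_eigenvalues_s15, hrank]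

theorem Matrix.IsHermitian.card_le_two_mul_rank {n : Type*} [Fintype n] [DecidableEq n]
    {A : Matrix n n ℝ} (hA : A.IsHermitian) (hdiag : ∀ i, A i i = 1)
    (hoff : ∀ i j, i ≠ j → A i j ^ 2 ≤ 1 / Fintype.card n) :
    Fintype.card n ≤ 2 * A.rank := by
  set N : ℝ := (Fintype.card n : ℝ)
  rcases (Fintype.card n).eq_zero_or_pos with hN | hN
  · simp [hN]
  have hNpos : 0 < N := by positivity
  have hentry : ∀ i j, A i j * A j i ≤ 1 / N + if i = j then 1 else 0 := by
    intro i j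
    rw [← hA.apply i j, star_trivial, ← sq]
    split_ifs with hij
    · simp [hij, hdiag, hNpos.le]
    · simpa using hoff j i (Ne.symm hij)
  have htrace : A.trace = N := by simp [trace, hdiag, N]
  have htrace_mul_self : (A * A).trace ≤ 2 * N :=
    calc (A * A).trace = ∑ i, ∑ j, A i j * A j i := by simp [trace, mul_apply]
      _ ≤ ∑ i, ∑ j, (1 / N + if i = j then 1 else 0) := by gcongr with i _ j _; exact hentry i j
      _ = 2 * N := by simp [sum_add_distrib, N]; field_simp; ring
  have hCS := hA.sq_trace_le_rank_mul_trace_mul_self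
  rw [htrace] at hCS
  rw [← Nat.cast_le (α := ℝ), Nat.cast_mul, Nat.cast_two]
  nlinarith

theorem Matrix.IsSymm.card_le_two_mul_rank_map_pow {n : Type*} [Fintype n] [DecidableEq n]
    {B : Matrix n n ℝ} (hB : B.IsSymm) (hdiag : ∀ i, B i i = 1) {ε : ℝ}
    (hoff : ∀ i j, i ≠ j → |B i j| ≤ ε) {k : ℕ} (hεk : ε ^ (2 * k) ≤ 1 / Fintype.card n) :
    Fintype.card n ≤ 2 * (B.map (· ^ k)).rank := by
  refine IsHermitian.card_le_two_mul_rank (isHermitian_iff_isSymm.mpr (hB.map _))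
    (by simp [hdiag]) fun i j hij => ?_
  calc (B i j ^ k) ^ 2 = (|B i j| ^ 2) ^ k := by rw [sq_abs, ← pow_mul, ← pow_mul, mul_comm]
    _ ≤ (ε ^ 2) ^ k := by gcongr; exact hoff i j hij
    _ = ε ^ (2 * k) := by rw [pow_mul]
    _ ≤ 1 / Fintype.card n := hεk

theorem Nat.choose_le_exp_one_mul_div_pow (n k : ℕ) :
    (n.choose k : ℝ) ≤ (Real.exp 1 * n / k) ^ k := by
  rcases k.eq_zero_or_pos with rfl | hk
  · simp
  have hk' : (0 : ℝ) < k := by exact_mod_cast hk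
  calc (n.choose k : ℝ) ≤ n ^ k / k.factorial := Nat.choose_le_pow_div k n
    _ = (n / k : ℝ) ^ k * ((k : ℝ) ^ k / k.factorial) := by
        rw [← mul_div_assoc, ← mul_pow, div_mul_cancel₀ _ hk'.ne']
    _ ≤ (n / k : ℝ) ^ k * Real.exp k := by
        gcongr; exact Real.pow_div_factorial_le_exp _ hk'.le k
    _ = (Real.exp 1 * n / k) ^ k := by
        rw [← Real.exp_one_pow, mul_div_assoc, mul_pow, mul_comm]

theorem Matrix.IsSymm.card_le_two_mul_exp_one_mul_div_pow {n : Type*} [Fintype n]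
    [DecidableEq n] {B : Matrix n n ℝ} (hB : B.IsSymm) (hdiag : ∀ i, B i i = 1) {ε : ℝ}
    (hoff : ∀ i j, i ≠ j → |B i j| ≤ ε) {k : ℕ} (hk : 1 ≤ k)
    (hεk : ε ^ (2 * k) ≤ 1 / Fintype.card n) :
    (Fintype.card n : ℝ) ≤ 2 * (Real.exp 1 * (B.rank + k - 1) / k) ^ k := by
  have hchoose : Fintype.card n ≤ 2 * (B.rank + k - 1).choose k :=
    (hB.card_le_two_mul_rank_map_pow hdiag hoff hεk).trans
      (Nat.mul_le_mul_left 2 (B.rank_map_pow_le k))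
  calc (Fintype.card n : ℝ) ≤ 2 * ((B.rank + k - 1).choose k : ℝ) := by exact_mod_cast hchoose
    _ ≤ 2 * (Real.exp 1 * ((B.rank + k - 1 : ℕ) : ℝ) / k) ^ k := by
        gcongr; exact Nat.choose_le_exp_one_mul_div_pow _ _
    _ = 2 * (Real.exp 1 * (B.rank + k - 1) / k) ^ k := by
        rw [Nat.cast_sub (by omega)]; push_cast; ring

theorem Real.rpow_logb_div_logb {b x y : ℝ} (hb0 : 0 < b) (hb1 : b ≠ 1) (hx0 : 0 < x)
    (hx1 : x ≠ 1) (hy : 0 < y) : x ^ (logb b y / logb b x) = y := by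
  rw [logb, logb, div_div_div_cancel_right₀ (Real.log_ne_zero_of_pos_of_ne_one hb0 hb1),
    log_div_log, rpow_logb hx0 hx1 hy]

/- The `⌈r⌉₊`-th root of `2` is at most `√2 < 5/3`, except when `⌈r⌉₊ = 1`; then `r = 1` and
`P ^ 2 ≥ 100 P` absorbs the factor `2`. -/
theorem three_fifths_mul_le_of_rpow_le_two_mul_pow_ceil {P r y : ℝ} (hP : 100 ≤ P)
    (hr : 1 ≤ r) (hy : 0 ≤ y) (h : P ^ (r + 1) ≤ 2 * y ^ ⌈r⌉₊) : 3 / 5 * P ≤ y := by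
  by_contra! hlt
  have hkr : (⌈r⌉₊ : ℝ) < r + 1 := Nat.ceil_lt_add_one (by linarith)
  rcases (Nat.one_le_ceil_iff.mpr (by linarith : 0 < r)).eq_or_lt with hk | hk
  · have hr1 : r = 1 := le_antisymm (by exact_mod_cast hk ▸ Nat.le_ceil r) hr
    rw [← hk, hr1, one_add_one_eq_two, Real.rpow_two, pow_one] at h
    nlinarith
  · have hPk : P ^ ⌈r⌉₊ ≤ P ^ (r + 1) := by
      rw [← Real.rpow_natCast]
      exact Real.rpow_le_rpow_of_exponent_le (by linarith) hkr.le
    have hyk : y ^ ⌈r⌉₊ < (3 / 5) ^ ⌈r⌉₊ * P ^ ⌈r⌉₊ := by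
      rw [← mul_pow]; exact pow_lt_pow_left₀ hlt hy (by omega)
    have h35 : ((3 : ℝ) / 5) ^ ⌈r⌉₊ ≤ (3 / 5) ^ 2 :=
      pow_le_pow_of_le_one (by norm_num) (by norm_num) hk
    nlinarith [pow_pos (by linarith : (0 : ℝ) < P) ⌈r⌉₊]

theorem le_of_rpow_le_two_mul_exp_one_mul_div_pow_ceil {x r D : ℝ} (hx : 100 ≤ x) (hr : 1 ≤ r)
    (hD : 0 ≤ D) (h : x ^ (2 * r) ≤ 2 * (Real.exp 1 * (D + ⌈r⌉₊ - 1) / ⌈r⌉₊) ^ ⌈r⌉₊) :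
    r / 5 * x ^ (2 * r / (r + 1)) ≤ D := by
  set P := x ^ (2 * r / (r + 1))
  have hk : (1 : ℝ) ≤ ⌈r⌉₊ := by exact_mod_cast Nat.one_le_ceil_iff.mpr (by linarith)
  have hrk : r ≤ ⌈r⌉₊ := Nat.le_ceil r
  have hkr : (⌈r⌉₊ : ℝ) < r + 1 := Nat.ceil_lt_add_one (by linarith)
  have hPx : x ≤ P := by
    conv_lhs => rw [← Real.rpow_one x]
    exact Real.rpow_le_rpow_of_exponent_le (by linarith)
      (by rw [le_div_iff₀ (by linarith)]; linarith)
  have hPpow : P ^ (r + 1) = x ^ (2 * r) := by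
    rw [← Real.rpow_mul (by linarith), div_mul_cancel₀ _ (by linarith)]
  have hroot := three_fifths_mul_le_of_rpow_le_two_mul_pow_ceil (hPx.trans' hx) hr
    (div_nonneg (mul_nonneg (Real.exp_pos 1).le (by linarith)) (by linarith)) (hPpow ▸ h)
  have he : Real.exp 1 < 2.7182818286 := Real.exp_one_lt_d9
  rw [le_div_iff₀ (by linarith)] at hroot
  nlinarith [mul_nonneg (sub_nonneg.2 (hPx.trans' hx)) (by linarith : (0 : ℝ) ≤ r),
    mul_le_mul_of_nonneg_right hrk (by linarith : (0 : ℝ) ≤ P)]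

/-- Quantitative rank lower bound (Alon): an `N × N` real symmetric matrix with
unit diagonal and off-diagonal entries at most `ε` in absolute value, where
`1/√N ≤ ε ≤ 1/100`, has rank at least `(r/5)(1/ε)^{2r/(r+1)}` with
`r = log₂ N / (2 log₂(1/ε))`. -/
theorem alon_rank_lower_bound (N : ℕ) (B : Matrix (Fin N) (Fin N) ℝ) (ε : ℝ)
    (hsym : B.IsSymm) (hdiag : ∀ i, B i i = 1)
    (hoff : ∀ i j, i ≠ j → |B i j| ≤ ε)
    (hε1 : 1 / Real.sqrt N ≤ ε) (hε2 : ε ≤ 1 / 100) :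
    (Real.logb 2 N / (2 * Real.logb 2 (1 / ε)) / 5) *
        (1 / ε) ^ (2 * (Real.logb 2 N / (2 * Real.logb 2 (1 / ε))) /
          (Real.logb 2 N / (2 * Real.logb 2 (1 / ε)) + 1))
      ≤ (B.rank : ℝ) := by
  rcases N.eq_zero_or_pos with rfl | hN
  · simp
  have hN' : (0 : ℝ) < N := by exact_mod_cast hN
  have hε : 0 < ε := (one_div_pos.mpr (Real.sqrt_pos.mpr hN')).trans_le hε1
  set x := 1 / ε
  have hx : 100 ≤ x := (le_one_div (by norm_num) hε).mpr hε2
  set r := Real.logb 2 N / (2 * Real.logb 2 x)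
  have hxr : x ^ (2 * r) = N := by
    rw [mul_div_assoc', mul_div_mul_left _ _ two_ne_zero,
      Real.rpow_logb_div_logb two_pos (by norm_num) (by linarith) (by linarith) hN']
  have hr : 1 ≤ r := by
    have hxN : x ^ (2 : ℝ) ≤ x ^ (2 * r) := by
      rw [hxr, Real.rpow_two, ← Real.sq_sqrt hN'.le]
      gcongr
      rwa [one_div_le hε (Real.sqrt_pos.mpr hN')]
    linarith [(Real.rpow_le_rpow_left_iff (by linarith)).mp hxN]
  have hεk : ε ^ (2 * ⌈r⌉₊) ≤ 1 / (N : ℝ) :=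
    calc ε ^ (2 * ⌈r⌉₊) = ε ^ ((2 * ⌈r⌉₊ : ℕ) : ℝ) := (Real.rpow_natCast _ _).symm
      _ ≤ ε ^ (2 * r) := Real.rpow_le_rpow_of_exponent_ge hε (by linarith)
          (by push_cast; linarith [Nat.le_ceil r])
      _ = 1 / N := by rw [← hxr, Real.div_rpow zero_le_one hε.le, Real.one_rpow, one_div_one_div]
  refine le_of_rpow_le_two_mul_exp_one_mul_div_pow_ceil hx hr (Nat.cast_nonneg _) ?_
  simpa [hxr] using hsym.card_le_two_mul_exp_one_mul_div_pow hdiag hoff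
    (Nat.one_le_ceil_iff.mpr (by linarith)) (by simpa using hεk)
end

section
/- Define sequences λ_t by λ₁ = λ², λ₂ = λ, λ_{2t−1} = λ + λ_{t−1}² and λ_{2t} = max(λ + λ_t², λ + λ_{t−1}²) for t ≥ 2. If 0 ≤ λ ≤ 1/4, then λ_t ≤ λ + 4λ² for all t ≥ 1. -/
/-- The recursively defined eigenvalue bounds of the zigzag expander family:
`λ₁ = λ²`, `λ₂ = λ`, `λ_{2t−1} = λ + λ_{t−1}²`,
`λ_{2t} = max(λ + λ_t², λ + λ_{t−1}²)` for `t ≥ 2`.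
If `0 ≤ λ ≤ 1/4` then `λ_t ≤ λ + 4λ²` for all `t ≥ 1`. -/
theorem zigzag_eigenvalue_bound (lam : ℝ) (l : ℕ → ℝ)
    (hlam0 : 0 ≤ lam) (hlam4 : lam ≤ 1 / 4)
    (h1 : l 1 = lam ^ 2) (h2 : l 2 = lam)
    (hodd : ∀ t, 2 ≤ t → l (2 * t - 1) = lam + (l (t - 1)) ^ 2)
    (heven : ∀ t, 2 ≤ t →
      l (2 * t) = max (lam + (l t) ^ 2) (lam + (l (t - 1)) ^ 2)) :
    ∀ t, 1 ≤ t → l t ≤ lam + 4 * lam ^ 2 := by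
  have key : ∀ x : ℝ, 0 ≤ x → x ≤ lam + 4 * lam ^ 2 →
      lam + x ^ 2 ≤ lam + 4 * lam ^ 2 := by
    intro x hx0 hx
    have h : x ^ 2 ≤ (lam + 4 * lam ^ 2) ^ 2 := by nlinarith
    nlinarith [mul_nonneg (mul_nonneg hlam0 hlam0) (sub_nonneg.2 hlam4),
      mul_nonneg (mul_nonneg (mul_nonneg hlam0 hlam0) hlam0) (sub_nonneg.2 hlam4)]
  have main : ∀ t, 1 ≤ t → 0 ≤ l t ∧ l t ≤ lam + 4 * lam ^ 2 := by
    intro t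
    induction t using Nat.strong_induction_on with
    | _ t ih =>
      intro ht
      rcases eq_or_lt_of_le ht with h | h
      · rw [(by omega : t = 1), h1]
        exact ⟨by positivity, by nlinarith⟩
      · rcases eq_or_lt_of_le (by omega : 2 ≤ t) with h2' | h2'
        · rw [← h2', h2]
          exact ⟨hlam0, by nlinarith⟩
        · rcases Nat.even_or_odd t with he | ho
          · obtain ⟨k, hk⟩ := he
            set s := t / 2 with hs
            have hts : t = 2 * s := by omega
            have hs2 : 2 ≤ s := by omega
            have ihs := ih s (by omega) (by omega)
            have ihs1 := ih (s - 1) (by omega) (by omega)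
            rw [hts, heven s hs2]
            refine ⟨?_, max_le (key _ ihs.1 ihs.2) (key _ ihs1.1 ihs1.2)⟩
            have := le_max_left (lam + (l s) ^ 2) (lam + (l (s - 1)) ^ 2)
            nlinarith [sq_nonneg (l s)]
          · obtain ⟨k, hk⟩ := ho
            set s := (t + 1) / 2 with hs
            have hts : t = 2 * s - 1 := by omega
            have hs2 : 2 ≤ s := by omega
            have ihs1 := ih (s - 1) (by omega) (by omega)
            rw [hts, hodd s hs2]
            exact ⟨by nlinarith [sq_nonneg (l (s - 1))], key _ ihs1.1 ihs1.2⟩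
  exact fun t ht => (main t ht).2
end
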